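/- arXiv:2309.01205 — 11 statements merged into one kernel-verified Lean document; each statement's English description precedes it below -/
import Mathlib

section
/- Let r_i, r_j, r_k, r_h > 0 and set c_{νμ} = cosh(r_ν + r_μ) and s_{νμ} = sinh(r_ν + r_μ). Then the three numbers X_{jk} = (c_{ij}c_{ik} + c_{jk})/(s_{ij}s_{ik}), X_{jh} = (c_{ij}c_{ih} + c_{jh})/(s_{ij}s_{ih}), X_{kh} = (c_{ik}c_{ih} + c_{kh})/(s_{ik}s_{ih}) are all strictly greater than 1, and the numbers x_{jk} = arcosh X_{jk}, x_{jh} = arcosh X_{jh}, x_{kh} = arcosh X_{kh} satisfy the strict triangle inequalities x_{jk} < x_{jh} + x_{kh}, x_{jh} < x_{jk} + x_{kh}, x_{kh} < x_{jk} + x_{jh}. -/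
open Real

/-- The inverse hyperbolic cosine, `arcosh x = log (x + √(x² − 1))`. -/
noncomputable def arcosh (x : ℝ) : ℝ := Real.log (x + Real.sqrt (x ^ 2 - 1))

lemma arcosh_nonneg' {x : ℝ} (hx : 1 ≤ x) : 0 ≤ _root_.arcosh x :=
  Real.log_nonneg (le_add_of_le_of_nonneg hx (Real.sqrt_nonneg _))

lemma cosh_arcosh' {x : ℝ} (hx : 1 ≤ x) : Real.cosh (_root_.arcosh x) = x := by
  have hs : Real.sqrt (x ^ 2 - 1) ^ 2 = x ^ 2 - 1 := Real.sq_sqrt (by nlinarith)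
  have h0 : (0:ℝ) < x + Real.sqrt (x ^ 2 - 1) := by nlinarith [Real.sqrt_nonneg (x ^ 2 - 1)]
  have hinv : (x + Real.sqrt (x ^ 2 - 1))⁻¹ = x - Real.sqrt (x ^ 2 - 1) :=
    inv_eq_of_mul_eq_one_right (by nlinarith)
  rw [Real.cosh_eq, _root_.arcosh, Real.exp_neg, Real.exp_log h0, hinv]
  ring

lemma sinh_arcosh' {x : ℝ} (hx : 1 ≤ x) : Real.sinh (_root_.arcosh x) = Real.sqrt (x ^ 2 - 1) := by
  have hs : Real.sqrt (x ^ 2 - 1) ^ 2 = x ^ 2 - 1 := Real.sq_sqrt (by nlinarith)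
  have h0 : (0:ℝ) < x + Real.sqrt (x ^ 2 - 1) := by nlinarith [Real.sqrt_nonneg (x ^ 2 - 1)]
  have hinv : (x + Real.sqrt (x ^ 2 - 1))⁻¹ = x - Real.sqrt (x ^ 2 - 1) :=
    inv_eq_of_mul_eq_one_right (by nlinarith)
  rw [Real.sinh_eq, _root_.arcosh, Real.exp_neg, Real.exp_log h0, hinv]
  ring

/-- If `1 < X, Y, Z` and `X ≤ Y * Z`, then `arcosh X < arcosh Y + arcosh Z`. -/
lemma arcosh_tri {X Y Z : ℝ} (h1 : 1 < X) (h2 : 1 < Y) (h3 : 1 < Z) (hXYZ : X ≤ Y * Z) :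
    _root_.arcosh X < _root_.arcosh Y + _root_.arcosh Z := by
  have hy : 0 < Real.sqrt (Y ^ 2 - 1) := Real.sqrt_pos.2 (by nlinarith)
  have hz : 0 < Real.sqrt (Z ^ 2 - 1) := Real.sqrt_pos.2 (by nlinarith)
  have hlt : Real.cosh (_root_.arcosh X) < Real.cosh (_root_.arcosh Y + _root_.arcosh Z) := by
    rw [cosh_arcosh' h1.le, Real.cosh_add, cosh_arcosh' h2.le, cosh_arcosh' h3.le,
      sinh_arcosh' h2.le, sinh_arcosh' h3.le]
    nlinarith [mul_pos hy hz]
  have h := Real.cosh_lt_cosh.1 hlt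
  rwa [abs_of_nonneg (arcosh_nonneg' h1.le),
    abs_of_nonneg (add_nonneg (arcosh_nonneg' h2.le) (arcosh_nonneg' h3.le))] at h

lemma P_nonneg' (a b c d : ℝ) (ha : 1 ≤ a) (hb : 1 ≤ b) (hc : 1 ≤ c) (hd : 1 ≤ d) :
    0 ≤ 1 + 2*d + c*d + b*d - b*c + 2*a + 4*a*d + a*c + 4*a*c*d + a*c*d^2 + a*b + 4*a*b*d
      + a*b*d^2 + 4*a*b*c*d + 2*a*b*c*d^2 - a^2*d^2 + a^2*c*d + a^2*b*d + 2*a^2*b*c*d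
      + a^2*b*c*d^2 := by
  have ha0 : (0:ℝ) ≤ a := by linarith
  have hb0 : (0:ℝ) ≤ b := by linarith
  have hc0 : (0:ℝ) ≤ c := by linarith
  have hd0 : (0:ℝ) ≤ d := by linarith
  have had : (1:ℝ) ≤ a * d := by nlinarith
  have hbc : (1:ℝ) ≤ b * c := by nlinarith
  have h1 : (0:ℝ) ≤ b * c * (4 * (a*d) - 1) := mul_nonneg (mul_nonneg hb0 hc0) (by linarith)
  have h2 : (0:ℝ) ≤ a^2 * d^2 * (b*c - 1) := mul_nonneg (by positivity) (by linarith)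
  nlinarith [h1, h2, mul_nonneg hc0 hd0, mul_nonneg hb0 hd0, mul_nonneg ha0 hd0,
    mul_nonneg ha0 hc0, mul_nonneg (mul_nonneg ha0 hc0) hd0,
    mul_nonneg (mul_nonneg (mul_nonneg ha0 hc0) hd0) hd0,
    mul_nonneg ha0 hb0, mul_nonneg (mul_nonneg ha0 hb0) hd0,
    mul_nonneg (mul_nonneg (mul_nonneg ha0 hb0) hd0) hd0,
    mul_nonneg (mul_nonneg (mul_nonneg (mul_nonneg ha0 hb0) hc0) hd0) hd0,
    mul_nonneg (mul_nonneg (mul_nonneg (mul_nonneg ha0 ha0) hc0) hd0) hd0,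
    mul_nonneg (mul_nonneg (mul_nonneg ha0 ha0) hc0) hd0,
    mul_nonneg (mul_nonneg (mul_nonneg ha0 ha0) hb0) hd0,
    mul_nonneg (mul_nonneg (mul_nonneg (mul_nonneg ha0 ha0) hb0) hc0) hd0]

lemma alg' (A B C D : ℝ) (hA : 1 ≤ A) (hB : 1 ≤ B) (hC : 1 ≤ C) (hD : 1 ≤ D) :
    ((A*B + (A*B)⁻¹)/2 * ((A*C + (A*C)⁻¹)/2) + (B*C + (B*C)⁻¹)/2) * ((A*D - (A*D)⁻¹)/2)^2 ≤
    ((A*B + (A*B)⁻¹)/2 * ((A*D + (A*D)⁻¹)/2) + (B*D + (B*D)⁻¹)/2) *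
    ((A*C + (A*C)⁻¹)/2 * ((A*D + (A*D)⁻¹)/2) + (C*D + (C*D)⁻¹)/2) := by
  have hA0 : (0:ℝ) < A := by linarith
  have hB0 : (0:ℝ) < B := by linarith
  have hC0 : (0:ℝ) < C := by linarith
  have hD0 : (0:ℝ) < D := by linarith
  have key := P_nonneg' (A^2) (B^2) (C^2) (D^2) (by nlinarith) (by nlinarith) (by nlinarith)
    (by nlinarith)
  rw [← sub_nonneg]
  have h : ((A*B + (A*B)⁻¹)/2 * ((A*D + (A*D)⁻¹)/2) + (B*D + (B*D)⁻¹)/2) *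
      ((A*C + (A*C)⁻¹)/2 * ((A*D + (A*D)⁻¹)/2) + (C*D + (C*D)⁻¹)/2) -
      ((A*B + (A*B)⁻¹)/2 * ((A*C + (A*C)⁻¹)/2) + (B*C + (B*C)⁻¹)/2) * ((A*D - (A*D)⁻¹)/2)^2
      = (1 + 2*D^2 + C^2*D^2 + B^2*D^2 - B^2*C^2 + 2*A^2 + 4*A^2*D^2 + A^2*C^2
        + 4*A^2*C^2*D^2 + A^2*C^2*D^4 + A^2*B^2 + 4*A^2*B^2*D^2 + A^2*B^2*D^4
        + 4*A^2*B^2*C^2*D^2 + 2*A^2*B^2*C^2*D^4 - A^4*D^4 + A^4*C^2*D^2 + A^4*B^2*D^2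
        + 2*A^4*B^2*C^2*D^2 + A^4*B^2*C^2*D^4) / (8*A^2*B*C*D^2) := by
    field_simp
    ring
  rw [h]
  exact div_nonneg (by nlinarith [key]) (by positivity)

lemma hex (ri rb rc rd : ℝ) (hi : 0 < ri) (hb : 0 < rb) (hc : 0 < rc) (hd : 0 < rd) :
    (cosh (ri+rb) * cosh (ri+rc) + cosh (rb+rc)) * sinh (ri+rd) ^ 2 ≤
    (cosh (ri+rb) * cosh (ri+rd) + cosh (rb+rd)) *
      (cosh (ri+rc) * cosh (ri+rd) + cosh (rc+rd)) := by
  have hA : (1:ℝ) ≤ exp ri := (one_lt_exp_iff.2 hi).le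
  have hB : (1:ℝ) ≤ exp rb := (one_lt_exp_iff.2 hb).le
  have hC : (1:ℝ) ≤ exp rc := (one_lt_exp_iff.2 hc).le
  have hD : (1:ℝ) ≤ exp rd := (one_lt_exp_iff.2 hd).le
  simp only [Real.cosh_eq, Real.sinh_eq, Real.exp_add, Real.exp_neg]
  exact alg' _ _ _ _ hA hB hC hD

lemma Xgt1 (ri rb rc : ℝ) (hi : 0 < ri) (hb : 0 < rb) (hc : 0 < rc) :
    1 < (cosh (ri+rb) * cosh (ri+rc) + cosh (rb+rc)) / (sinh (ri+rb) * sinh (ri+rc)) := by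
  have h1 : 0 < sinh (ri+rb) := sinh_pos_iff.2 (by linarith)
  have h2 : 0 < sinh (ri+rc) := sinh_pos_iff.2 (by linarith)
  rw [lt_div_iff₀ (mul_pos h1 h2), one_mul]
  have hsub := Real.cosh_sub (ri+rb) (ri+rc)
  have hc1 : 0 < cosh ((ri+rb) - (ri+rc)) := Real.cosh_pos _
  have hc2 : 0 < cosh (rb+rc) := Real.cosh_pos _
  linarith

lemma Xmul (ri rb rc rd : ℝ) (hi : 0 < ri) (hb : 0 < rb) (hc : 0 < rc) (hd : 0 < rd) :
    (cosh (ri+rb) * cosh (ri+rc) + cosh (rb+rc)) / (sinh (ri+rb) * sinh (ri+rc)) ≤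
    ((cosh (ri+rb) * cosh (ri+rd) + cosh (rb+rd)) / (sinh (ri+rb) * sinh (ri+rd))) *
    ((cosh (ri+rc) * cosh (ri+rd) + cosh (rc+rd)) / (sinh (ri+rc) * sinh (ri+rd))) := by
  have s1 : 0 < sinh (ri+rb) := sinh_pos_iff.2 (by linarith)
  have s2 : 0 < sinh (ri+rc) := sinh_pos_iff.2 (by linarith)
  have s3 : 0 < sinh (ri+rd) := sinh_pos_iff.2 (by linarith)
  rw [div_mul_div_comm, div_le_div_iff₀ (mul_pos s1 s2) (by positivity)]
  have h := hex ri rb rc rd hi hb hc hd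
  nlinarith [mul_le_mul_of_nonneg_right h (mul_pos s1 s2).le]

/-- For `r_i, r_j, r_k, r_h > 0`, with `c_{νμ} = cosh (r_ν + r_μ)` and
`s_{νμ} = sinh (r_ν + r_μ)`, the three numbers
`X_{jk} = (c_{ij}c_{ik} + c_{jk})/(s_{ij}s_{ik})`, etc., are all `> 1`, and their
`arcosh`'s satisfy the strict triangle inequalities. (Theorem 2.2 of the paper.) -/
theorem vertex_triangle_nondegenerate (ri rj rk rh : ℝ)
    (hri : 0 < ri) (hrj : 0 < rj) (hrk : 0 < rk) (hrh : 0 < rh)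
    (Xjk Xjh Xkh xjk xjh xkh : ℝ)
    (hXjk : Xjk = (cosh (ri + rj) * cosh (ri + rk) + cosh (rj + rk)) /
        (sinh (ri + rj) * sinh (ri + rk)))
    (hXjh : Xjh = (cosh (ri + rj) * cosh (ri + rh) + cosh (rj + rh)) /
        (sinh (ri + rj) * sinh (ri + rh)))
    (hXkh : Xkh = (cosh (ri + rk) * cosh (ri + rh) + cosh (rk + rh)) /
        (sinh (ri + rk) * sinh (ri + rh)))
    (hxjk : xjk = _root_.arcosh Xjk) (hxjh : xjh = _root_.arcosh Xjh) (hxkh : xkh = _root_.arcosh Xkh) :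
    1 < Xjk ∧ 1 < Xjh ∧ 1 < Xkh ∧
      xjk < xjh + xkh ∧ xjh < xjk + xkh ∧ xkh < xjk + xjh := by
  have h1 : 1 < Xjk := hXjk ▸ Xgt1 ri rj rk hri hrj hrk
  have h2 : 1 < Xjh := hXjh ▸ Xgt1 ri rj rh hri hrj hrh
  have h3 : 1 < Xkh := hXkh ▸ Xgt1 ri rk rh hri hrk hrh
  have pjk : Xjk ≤ Xjh * Xkh := by
    rw [hXjk, hXjh, hXkh]
    exact Xmul ri rj rk rh hri hrj hrk hrh
  have pjh : Xjh ≤ Xjk * Xkh := by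
    rw [hXjh, hXjk, hXkh]
    have h := Xmul ri rj rh rk hri hrj hrh hrk
    rw [add_comm rh rk, mul_comm (cosh (ri+rh)) (cosh (ri+rk)),
      mul_comm (sinh (ri+rh)) (sinh (ri+rk))] at h
    exact h
  have pkh : Xkh ≤ Xjk * Xjh := by
    rw [hXkh, hXjk, hXjh]
    have h := Xmul ri rk rh rj hri hrk hrh hrj
    rw [add_comm rk rj, add_comm rh rj, mul_comm (cosh (ri+rk)) (cosh (ri+rj)),
      mul_comm (sinh (ri+rk)) (sinh (ri+rj)), mul_comm (cosh (ri+rh)) (cosh (ri+rj)),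
      mul_comm (sinh (ri+rh)) (sinh (ri+rj))] at h
    exact h
  subst hxjk hxjh hxkh
  exact ⟨h1, h2, h3, arcosh_tri h1 h2 h3 pjk, arcosh_tri h2 h1 h3 pjh, arcosh_tri h3 h1 h2 pkh⟩
end

section
/- Positive real numbers x, y, z satisfy the strict triangle inequalities (x < y + z, y < x + z, z < x + y) if and only if 1 + 2 cosh x cosh y cosh z − cosh^2 x − cosh^2 y − cosh^2 z > 0. -/
open Real

/-- Positive reals `x, y, z` satisfy the strict triangle inequalities iff
`1 + 2 cosh x cosh y cosh z − cosh² x − cosh² y − cosh² z > 0`. -/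
theorem triangle_ineq_iff_hyperbolic_pos (x y z : ℝ) (hx : 0 < x) (hy : 0 < y) (hz : 0 < z) :
    (x < y + z ∧ y < x + z ∧ z < x + y) ↔
      0 < 1 + 2 * cosh x * cosh y * cosh z - cosh x ^ 2 - cosh y ^ 2 - cosh z ^ 2 := by
  have key : 1 + 2 * cosh x * cosh y * cosh z - cosh x ^ 2 - cosh y ^ 2 - cosh z ^ 2
      = (cosh (y + z) - cosh x) * (cosh x - cosh (y - z)) := by
    rw [Real.cosh_add, Real.cosh_sub]
    have h1 := Real.sinh_sq y
    have h2 := Real.sinh_sq z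
    nlinarith [h1, h2, sq_nonneg (sinh y * sinh z)]
  rw [key]
  have hle : cosh (y - z) ≤ cosh (y + z) := by
    rw [Real.cosh_le_cosh]
    calc |y - z| ≤ |y| + |z| := abs_sub _ _
      _ = y + z := by rw [abs_of_pos hy, abs_of_pos hz]
      _ = |y + z| := (abs_of_pos (by linarith)).symm
  constructor
  · rintro ⟨h1, h2, h3⟩
    have hA : cosh x < cosh (y + z) := by
      rw [Real.cosh_lt_cosh, abs_of_pos hx, abs_of_pos (by linarith)]; exact h1
    have hB : cosh (y - z) < cosh x := by
      rw [Real.cosh_lt_cosh, abs_of_pos hx]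
      rw [abs_lt]; constructor <;> linarith
    nlinarith
  · intro h
    rcases mul_pos_iff.mp h with ⟨hA, hB⟩ | ⟨hA, hB⟩
    · have h1 : cosh x < cosh (y + z) := by linarith
      have h2 : cosh (y - z) < cosh x := by linarith
      rw [Real.cosh_lt_cosh, abs_of_pos hx, abs_of_pos (by linarith)] at h1
      rw [Real.cosh_lt_cosh, abs_of_pos hx, abs_lt] at h2
      exact ⟨h1, by linarith [h2.1, h2.2], by linarith [h2.1, h2.2]⟩
    · linarith
end

section
/- For all real numbers a, b, c: 2 cosh(a+b) cosh(a+c) cosh(b+c) + cosh^2(a+b) + cosh^2(a+c) + cosh^2(b+c) − 1 = 4 cosh(a+b+c) cosh a cosh b cosh c. -/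
open Real

/-- `2 cosh(a+b) cosh(a+c) cosh(b+c) + cosh²(a+b) + cosh²(a+c) + cosh²(b+c) − 1
  = 4 cosh(a+b+c) cosh a cosh b cosh c` for all real `a, b, c`. -/
theorem cosh_denominator_identity (a b c : ℝ) :
    2 * cosh (a + b) * cosh (a + c) * cosh (b + c) +
        cosh (a + b) ^ 2 + cosh (a + c) ^ 2 + cosh (b + c) ^ 2 - 1 =
      4 * cosh (a + b + c) * cosh a * cosh b * cosh c := by
  simp only [Real.cosh_eq, Real.exp_add, Real.exp_neg, neg_add]
  have ha := Real.exp_ne_zero a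
  have hb := Real.exp_ne_zero b
  have hc := Real.exp_ne_zero c
  field_simp
  ring
end

section
/- For all real numbers r_i, r_j, r_k, r_h, set c_{νμ} = cosh(r_ν + r_μ), t_ν = tanh r_ν, and Q_2 = (t_i+t_j+t_k+t_h)^2 − 2(t_i^2+t_j^2+t_k^2+t_h^2) + 4. Then c_{ij}^2 + c_{ik}^2 + c_{ih}^2 + c_{jk}^2 + c_{jh}^2 + c_{kh}^2 − c_{ij}^2c_{kh}^2 − c_{ik}^2c_{jh}^2 − c_{ih}^2c_{jk}^2 + 2c_{ij}c_{ik}c_{jk} + 2c_{ik}c_{ih}c_{kh} + 2c_{jk}c_{jh}c_{kh} + 2c_{ij}c_{ih}c_{jh} + 2c_{ik}c_{ih}c_{jk}c_{jh} + 2c_{ij}c_{ik}c_{jh}c_{kh} + 2c_{ij}c_{ih}c_{jk}c_{kh} − 1 = 4 cosh^2 r_i cosh^2 r_j cosh^2 r_k cosh^2 r_h · Q_2. -/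
open Real

lemma key_Q1Q2 (ci si cj sj ck sk ch sh : ℝ)
    (hi : ci ^ 2 - si ^ 2 - 1 = 0) (hj : cj ^ 2 - sj ^ 2 - 1 = 0)
    (hk : ck ^ 2 - sk ^ 2 - 1 = 0) (hh : ch ^ 2 - sh ^ 2 - 1 = 0) :
    (ci*cj + si*sj) ^ 2 + (ci*ck + si*sk) ^ 2 + (ci*ch + si*sh) ^ 2
      + (cj*ck + sj*sk) ^ 2 + (cj*ch + sj*sh) ^ 2 + (ck*ch + sk*sh) ^ 2
      - (ci*cj + si*sj) ^ 2 * (ck*ch + sk*sh) ^ 2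
      - (ci*ck + si*sk) ^ 2 * (cj*ch + sj*sh) ^ 2
      - (ci*ch + si*sh) ^ 2 * (cj*ck + sj*sk) ^ 2
      + 2 * (ci*cj + si*sj) * (ci*ck + si*sk) * (cj*ck + sj*sk)
      + 2 * (ci*ck + si*sk) * (ci*ch + si*sh) * (ck*ch + sk*sh)
      + 2 * (cj*ck + sj*sk) * (cj*ch + sj*sh) * (ck*ch + sk*sh)
      + 2 * (ci*cj + si*sj) * (ci*ch + si*sh) * (cj*ch + sj*sh)
      + 2 * (ci*ck + si*sk) * (ci*ch + si*sh) * (cj*ck + sj*sk) * (cj*ch + sj*sh)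
      + 2 * (ci*cj + si*sj) * (ci*ck + si*sk) * (cj*ch + sj*sh) * (ck*ch + sk*sh)
      + 2 * (ci*cj + si*sj) * (ci*ch + si*sh) * (cj*ck + sj*sk) * (ck*ch + sk*sh)
      - 1 =
    4 * ((si*cj*ck*ch + ci*sj*ck*ch + ci*cj*sk*ch + ci*cj*ck*sh) ^ 2
      - 2 * (si^2*cj^2*ck^2*ch^2 + ci^2*sj^2*ck^2*ch^2 + ci^2*cj^2*sk^2*ch^2
            + ci^2*cj^2*ck^2*sh^2)
      + 4 * ci^2*cj^2*ck^2*ch^2) := by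
  linear_combination
    ((1:ℝ)*ch^2 + (2:ℝ)*ck*sk*ch*sh + (1:ℝ)*ck^2 + (2:ℝ)*ck^2*ch^2 + (-1:ℝ)*sj^2*sk^2*ch^2 + (2:ℝ)*sj^2*ck*sk*ch*sh + (-1:ℝ)*sj^2*ck^2*sh^2 + (4:ℝ)*sj^2*ck^2*ch^2 + (2:ℝ)*cj*sj*ch*sh + (2:ℝ)*cj*sj*sk^2*ch*sh + (2:ℝ)*cj*sj*ck*sk + (2:ℝ)*cj*sj*ck*sk*sh^2 + (-6:ℝ)*cj*sj*ck*sk*ch^2 + (-6:ℝ)*cj*sj*ck^2*ch*sh + (1:ℝ)*cj^2 + (2:ℝ)*cj^2*ch^2 + (-1:ℝ)*cj^2*sk^2*sh^2 + (4:ℝ)*cj^2*sk^2*ch^2 + (-6:ℝ)*cj^2*ck*sk*ch*sh + (2:ℝ)*cj^2*ck^2 + (4:ℝ)*cj^2*ck^2*sh^2 + (-13:ℝ)*cj^2*ck^2*ch^2) * hi +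
    ((1:ℝ) + (3:ℝ)*ch^2 + (-1:ℝ)*sk^2*sh^2 + (4:ℝ)*sk^2*ch^2 + (-4:ℝ)*ck*sk*ch*sh + (3:ℝ)*ck^2 + (4:ℝ)*ck^2*sh^2 + (-11:ℝ)*ck^2*ch^2 + (1:ℝ)*si^2 + (2:ℝ)*si^2*ch^2 + (-1:ℝ)*si^2*sk^2*sh^2 + (3:ℝ)*si^2*sk^2*ch^2 + (-4:ℝ)*si^2*ck*sk*ch*sh + (2:ℝ)*si^2*ck^2 + (3:ℝ)*si^2*ck^2*sh^2 + (-9:ℝ)*si^2*ck^2*ch^2 + (2:ℝ)*ci*si*ch*sh + (2:ℝ)*ci*si*sk^2*ch*sh + (2:ℝ)*ci*si*ck*sk + (2:ℝ)*ci*si*ck*sk*sh^2 + (-6:ℝ)*ci*si*ck*sk*ch^2 + (-6:ℝ)*ci*si*ck^2*ch*sh) * hj +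
    ((4:ℝ) + (4:ℝ)*sh^2 + (-8:ℝ)*ch^2 + (3:ℝ)*sj^2 + (3:ℝ)*sj^2*sh^2 + (-7:ℝ)*sj^2*ch^2 + (-4:ℝ)*cj*sj*ch*sh + (3:ℝ)*si^2 + (3:ℝ)*si^2*sh^2 + (-7:ℝ)*si^2*ch^2 + (2:ℝ)*si^2*sj^2 + (2:ℝ)*si^2*sj^2*sh^2 + (-6:ℝ)*si^2*sj^2*ch^2 + (-4:ℝ)*si^2*cj*sj*ch*sh + (-4:ℝ)*ci*si*ch*sh + (-4:ℝ)*ci*si*sj^2*ch*sh + (2:ℝ)*ci*si*cj*sj + (2:ℝ)*ci*si*cj*sj*sh^2 + (-6:ℝ)*ci*si*cj*sj*ch^2) * hk +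
    ((-4:ℝ) + (-4:ℝ)*sk^2 + (-4:ℝ)*sj^2 + (-4:ℝ)*sj^2*sk^2 + (-4:ℝ)*cj*sj*ck*sk + (-4:ℝ)*si^2 + (-4:ℝ)*si^2*sk^2 + (-4:ℝ)*si^2*sj^2 + (-4:ℝ)*si^2*sj^2*sk^2 + (-4:ℝ)*si^2*cj*sj*ck*sk + (-4:ℝ)*ci*si*ck*sk + (-4:ℝ)*ci*si*sj^2*ck*sk + (-4:ℝ)*ci*si*cj*sj + (-4:ℝ)*ci*si*cj*sj*sk^2) * hh

/-- Equation (5) of the paper: with `c_{νμ} = cosh(r_ν + r_μ)`, `t_ν = tanh r_ν`, the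
Cayley–Menger-type quantity `Q₁` equals
`4 cosh² r_i cosh² r_j cosh² r_k cosh² r_h · Q₂`. -/
theorem Q1_eq_Q2 (ri rj rk rh : ℝ)
    (cij cik cih cjk cjh ckh ti tj tk th Q2 : ℝ)
    (hcij : cij = cosh (ri + rj)) (hcik : cik = cosh (ri + rk))
    (hcih : cih = cosh (ri + rh)) (hcjk : cjk = cosh (rj + rk))
    (hcjh : cjh = cosh (rj + rh)) (hckh : ckh = cosh (rk + rh))
    (hti : ti = tanh ri) (htj : tj = tanh rj) (htk : tk = tanh rk) (hth : th = tanh rh)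
    (hQ2 : Q2 = (ti + tj + tk + th) ^ 2 - 2 * (ti ^ 2 + tj ^ 2 + tk ^ 2 + th ^ 2) + 4) :
    cij ^ 2 + cik ^ 2 + cih ^ 2 + cjk ^ 2 + cjh ^ 2 + ckh ^ 2
        - cij ^ 2 * ckh ^ 2 - cik ^ 2 * cjh ^ 2 - cih ^ 2 * cjk ^ 2
        + 2 * cij * cik * cjk + 2 * cik * cih * ckh + 2 * cjk * cjh * ckh
        + 2 * cij * cih * cjh
        + 2 * cik * cih * cjk * cjh + 2 * cij * cik * cjh * ckh
        + 2 * cij * cih * cjk * ckh - 1 =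
      4 * cosh ri ^ 2 * cosh rj ^ 2 * cosh rk ^ 2 * cosh rh ^ 2 * Q2 := by
  subst hcij hcik hcih hcjk hcjh hckh hti htj htk hth hQ2
  simp only [Real.cosh_add, Real.tanh_eq_sinh_div_cosh]
  have hci : Real.cosh ri ≠ 0 := (Real.cosh_pos ri).ne'
  have hcj : Real.cosh rj ≠ 0 := (Real.cosh_pos rj).ne'
  have hck : Real.cosh rk ≠ 0 := (Real.cosh_pos rk).ne'
  have hch : Real.cosh rh ≠ 0 := (Real.cosh_pos rh).ne'
  have key := key_Q1Q2 (Real.cosh ri) (Real.sinh ri) (Real.cosh rj) (Real.sinh rj)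
    (Real.cosh rk) (Real.sinh rk) (Real.cosh rh) (Real.sinh rh)
    (by rw [Real.cosh_sq]; ring) (by rw [Real.cosh_sq]; ring)
    (by rw [Real.cosh_sq]; ring) (by rw [Real.cosh_sq]; ring)
  rw [key]
  field_simp
end

section
/- For all real numbers r_i, r_j, r_k, r_h, set c_{νμ} = cosh(r_ν + r_μ), s_{ij} = sinh(r_i + r_j), t_ν = tanh r_ν, and Q_2 = (t_i+t_j+t_k+t_h)^2 − 2(t_i^2+t_j^2+t_k^2+t_h^2) + 4. Then c_{ik}c_{ih} + c_{jk}c_{jh} + c_{ij}c_{ik}c_{jh} + c_{ij}c_{ih}c_{jk} − s_{ij}^2 c_{kh} = cosh^2 r_i cosh^2 r_j cosh r_k cosh r_h · [Q_2 − (t_i + t_j)^2 + (t_k − t_h)^2]. -/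
open Real

set_option maxHeartbeats 1000000

/-- The numerator identity in the proof of Proposition 3.1 of the paper:
`c_{ik}c_{ih} + c_{jk}c_{jh} + c_{ij}c_{ik}c_{jh} + c_{ij}c_{ih}c_{jk} − s_{ij}² c_{kh}
  = cosh² r_i cosh² r_j cosh r_k cosh r_h · [Q₂ − (t_i + t_j)² + (t_k − t_h)²]`. -/
theorem numerator_identity (ri rj rk rh : ℝ)
    (cij cik cih cjk cjh ckh sij ti tj tk th Q2 : ℝ)
    (hcij : cij = cosh (ri + rj)) (hcik : cik = cosh (ri + rk))
    (hcih : cih = cosh (ri + rh)) (hcjk : cjk = cosh (rj + rk))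
    (hcjh : cjh = cosh (rj + rh)) (hckh : ckh = cosh (rk + rh))
    (hsij : sij = sinh (ri + rj))
    (hti : ti = tanh ri) (htj : tj = tanh rj) (htk : tk = tanh rk) (hth : th = tanh rh)
    (hQ2 : Q2 = (ti + tj + tk + th) ^ 2 - 2 * (ti ^ 2 + tj ^ 2 + tk ^ 2 + th ^ 2) + 4) :
    cik * cih + cjk * cjh + cij * cik * cjh + cij * cih * cjk - sij ^ 2 * ckh =
      cosh ri ^ 2 * cosh rj ^ 2 * cosh rk * cosh rh *
        (Q2 - (ti + tj) ^ 2 + (tk - th) ^ 2) := by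
  subst hcij hcik hcih hcjk hcjh hckh hsij hti htj htk hth hQ2
  set si := sinh ri; set ci := cosh ri
  set sj := sinh rj; set cj := cosh rj
  set sk := sinh rk; set ck := cosh rk
  set sh := sinh rh; set ch := cosh rh
  have hci : ci ≠ 0 := (cosh_pos ri).ne'
  have hcj : cj ≠ 0 := (cosh_pos rj).ne'
  have hck : ck ≠ 0 := (cosh_pos rk).ne'
  have hch : ch ≠ 0 := (cosh_pos rh).ne'
  have key : ci ^ 2 * cj ^ 2 * ck * ch *
      (((si / ci + sj / cj + sk / ck + sh / ch) ^ 2 -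
          2 * ((si / ci) ^ 2 + (sj / cj) ^ 2 + (sk / ck) ^ 2 + (sh / ch) ^ 2) + 4) -
        (si / ci + sj / cj) ^ 2 + (sk / ck - sh / ch) ^ 2) =
      2 * si * sk * ci * cj ^ 2 * ch + 2 * si * sh * ci * cj ^ 2 * ck +
        2 * sj * sk * ci ^ 2 * cj * ch + 2 * sj * sh * ci ^ 2 * cj * ck -
        2 * si ^ 2 * cj ^ 2 * ck * ch - 2 * sj ^ 2 * ci ^ 2 * ck * ch +
        4 * ci ^ 2 * cj ^ 2 * ck * ch := by
    field_simp
    ring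
  simp only [Real.tanh_eq_sinh_div_cosh, Real.cosh_add, Real.sinh_add]
  rw [key]
  linear_combination
    (ck * ch - 2 * cj ^ 2 * ck * ch - sj * cj * ck * sh - sj * cj * sk * ch +
        sj ^ 2 * ck * ch - sj ^ 2 * sk * sh) * Real.cosh_sq_sub_sinh_sq ri +
    (-(ck * ch) - si * ci * ck * sh - si * ci * sk * ch - si ^ 2 * ck * ch -
        si ^ 2 * sk * sh) * Real.cosh_sq_sub_sinh_sq rj
end

section
/- For all t_i, t_j, t_k, t_h ∈ (0,1), with Q_2 = (t_i+t_j+t_k+t_h)^2 − 2(t_i^2+t_j^2+t_k^2+t_h^2) + 4, λ_1 = t_it_j + t_it_k + t_jt_k + 1 and λ_2 = t_it_j + t_it_h + t_jt_h + 1, the number C = (2 − t_i^2 − t_j^2 + t_it_k + t_it_h + t_jt_k + t_jt_h) / (2√(λ_1λ_2)) lies in the open interval (−1, 1), and √(1 − C^2) = (t_i + t_j)√Q_2 / (2√(λ_1λ_2)). -/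
/-- Formula (9) of the paper: the cosine `C` of the dihedral angle lies in `(−1, 1)`
and `√(1 − C²) = (t_i + t_j)√Q₂ / (2√(λ₁λ₂))`. -/
theorem sin_dihedral_angle (ti tj tk th : ℝ)
    (hi : ti ∈ Set.Ioo (0 : ℝ) 1) (hj : tj ∈ Set.Ioo (0 : ℝ) 1)
    (hk : tk ∈ Set.Ioo (0 : ℝ) 1) (hh : th ∈ Set.Ioo (0 : ℝ) 1)
    (Q2 lam1 lam2 C : ℝ)
    (hQ2 : Q2 = (ti + tj + tk + th) ^ 2 - 2 * (ti ^ 2 + tj ^ 2 + tk ^ 2 + th ^ 2) + 4)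
    (hlam1 : lam1 = ti * tj + ti * tk + tj * tk + 1)
    (hlam2 : lam2 = ti * tj + ti * th + tj * th + 1)
    (hC : C = (2 - ti ^ 2 - tj ^ 2 + ti * tk + ti * th + tj * tk + tj * th) /
        (2 * Real.sqrt (lam1 * lam2))) :
    C ∈ Set.Ioo (-1 : ℝ) 1 ∧
      Real.sqrt (1 - C ^ 2) =
        (ti + tj) * Real.sqrt Q2 / (2 * Real.sqrt (lam1 * lam2)) := by
  obtain ⟨hi0, hi1⟩ := hi
  obtain ⟨hj0, hj1⟩ := hj
  obtain ⟨hk0, hk1⟩ := hk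
  obtain ⟨hh0, hh1⟩ := hh
  have hl1 : (0:ℝ) < lam1 := by nlinarith
  have hl2 : (0:ℝ) < lam2 := by nlinarith
  have hll : (0:ℝ) < lam1 * lam2 := mul_pos hl1 hl2
  set s := Real.sqrt (lam1 * lam2) with hsdef
  have hs0 : 0 < s := Real.sqrt_pos.mpr hll
  have hs2 : s ^ 2 = lam1 * lam2 := Real.sq_sqrt hll.le
  have hQ2pos : 0 < Q2 := by nlinarith
  set N : ℝ := 2 - ti ^ 2 - tj ^ 2 + ti * tk + ti * th + tj * tk + tj * th with hN
  have hNpos : 0 < N := by nlinarith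
  have key : 4 * (lam1 * lam2) - N ^ 2 = (ti + tj) ^ 2 * Q2 := by
    simp only [hN, hlam1, hlam2, hQ2]; ring
  have hC2 : C ^ 2 = N ^ 2 / (4 * (lam1 * lam2)) := by
    rw [hC, div_pow, mul_pow, hs2]; norm_num
  have hCsq : 1 - C ^ 2 = (ti + tj) ^ 2 * Q2 / (4 * (lam1 * lam2)) := by
    rw [hC2, ← key]
    field_simp
  have h1C : 0 < 1 - C ^ 2 := by
    rw [hCsq]
    positivity
  have habs : |C| < 1 := by
    rw [← sq_lt_one_iff_abs_lt_one]; linarith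
  obtain ⟨hCneg, hC1⟩ := abs_lt.mp habs
  refine ⟨⟨hCneg, hC1⟩, ?_⟩
  rw [hCsq]
  rw [show (ti + tj) ^ 2 * Q2 / (4 * (lam1 * lam2)) =
      ((ti + tj) * Real.sqrt Q2 / (2 * s)) ^ 2 by
    rw [div_pow, mul_pow, mul_pow, Real.sq_sqrt hQ2pos.le, hs2]; ring]
  exact Real.sqrt_sq (by positivity)
end

section
/- Define, for positive reals r_i, r_j, r_k, r_h with t_ν = tanh r_ν, λ_1 = t_it_j + t_it_k + t_jt_k + 1, λ_2 = t_it_j + t_it_h + t_jt_h + 1, the dihedral angle β_{ij,kh}(r_i, r_j, r_k, r_h) = arccos((2 − t_i^2 − t_j^2 + t_it_k + t_it_h + t_jt_k + t_jt_h)/(2√(λ_1λ_2))). Then for fixed r_i, r_j, r_h > 0, the function r_k ↦ β_{ij,kh} has, at every r_k > 0, derivative equal to −cosh r_i · cosh r_j · (t_i + t_j)(t_i + t_j + t_k − t_h) / (2√Q_2 · cosh(r_i + r_j + r_k) · cosh r_k), where Q_2 = (t_i+t_j+t_k+t_h)^2 − 2(t_i^2+t_j^2+t_k^2+t_h^2)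 + 4. -/
open Real

private lemma tanh_hasDerivAt (x : ℝ) :
    HasDerivAt Real.tanh (1 / Real.cosh x ^ 2) x := by
  have hc : Real.cosh x ≠ 0 := (Real.cosh_pos x).ne'
  have h := (Real.hasDerivAt_sinh x).div (Real.hasDerivAt_cosh x) hc
  have he : Real.tanh = fun y => Real.sinh y / Real.cosh y := by
    funext y; exact Real.tanh_eq_sinh_div_cosh y
  rw [he]
  refine h.congr_deriv ?_
  have h1 := Real.cosh_sq_sub_sinh_sq x
  field_simp
  linarith

private lemma tanh_mem (x : ℝ) (hx : 0 < x) : 0 < Real.tanh x ∧ Real.tanh x < 1 := by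
  rw [Real.tanh_eq_sinh_div_cosh]
  constructor
  · exact div_pos (Real.sinh_pos_iff.mpr hx) (Real.cosh_pos x)
  · rw [div_lt_one (Real.cosh_pos x)]; exact Real.sinh_lt_cosh x

set_option maxHeartbeats 1000000 in
/-- Proposition 3.2 of the paper: the derivative of the dihedral angle
`β_{ij,kh} = arccos((2 − t_i² − t_j² + t_it_k + t_it_h + t_jt_k + t_jt_h)/(2√(λ₁λ₂)))`
with respect to `r_k` equals
`− cosh r_i · cosh r_j · (t_i + t_j)(t_i + t_j + t_k − t_h) / (2√Q₂ · cosh(r_i+r_j+r_k) · cosh r_k)`. -/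
theorem deriv_beta_rk (ri rj rk rh : ℝ)
    (hri : 0 < ri) (hrj : 0 < rj) (hrk : 0 < rk) (hrh : 0 < rh)
    (ti tj tk th Q2 : ℝ)
    (hti : ti = tanh ri) (htj : tj = tanh rj) (htk : tk = tanh rk) (hth : th = tanh rh)
    (hQ2 : Q2 = (ti + tj + tk + th) ^ 2 - 2 * (ti ^ 2 + tj ^ 2 + tk ^ 2 + th ^ 2) + 4) :
    HasDerivAt
      (fun x : ℝ => arccos
        ((2 - ti ^ 2 - tj ^ 2 + ti * tanh x + ti * th + tj * tanh x + tj * th) /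
          (2 * Real.sqrt ((ti * tj + ti * tanh x + tj * tanh x + 1) *
            (ti * tj + ti * th + tj * th + 1)))))
      (-(cosh ri * cosh rj * (ti + tj) * (ti + tj + tk - th)) /
        (2 * Real.sqrt Q2 * cosh (ri + rj + rk) * cosh rk))
      rk := by
  obtain ⟨hti0, hti1⟩ : 0 < ti ∧ ti < 1 := hti ▸ tanh_mem ri hri
  obtain ⟨htj0, htj1⟩ : 0 < tj ∧ tj < 1 := htj ▸ tanh_mem rj hrj
  obtain ⟨htk0, htk1⟩ : 0 < tk ∧ tk < 1 := htk ▸ tanh_mem rk hrk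
  obtain ⟨hth0, hth1⟩ : 0 < th ∧ th < 1 := hth ▸ tanh_mem rh hrh
  have hL1 : 0 < ti * tj + ti * tk + tj * tk + 1 := by positivity
  have hL2 : 0 < ti * tj + ti * th + tj * th + 1 := by positivity
  have hQ2pos : 0 < Q2 := by
    have e : Q2 = 4 - (ti - tj) ^ 2 - (tk - th) ^ 2 + 2 * ((ti + tj) * (tk + th)) := by
      rw [hQ2]; ring
    have h1 : (ti - tj) ^ 2 < 1 := by nlinarith
    have h2 : (tk - th) ^ 2 < 1 := by nlinarith
    have h3 : 0 < (ti + tj) * (tk + th) := by positivity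
    linarith
  have hSQ : (0:ℝ) < Real.sqrt Q2 := Real.sqrt_pos.mpr hQ2pos
  have hQrt : (Real.sqrt Q2) ^ 2 = Q2 := Real.sq_sqrt hQ2pos.le
  set S := Real.sqrt ((ti * tj + ti * tk + tj * tk + 1) * (ti * tj + ti * th + tj * th + 1))
    with hSdef
  have hSpos : 0 < S := Real.sqrt_pos.mpr (mul_pos hL1 hL2)
  have hS2 : S ^ 2 = (ti * tj + ti * tk + tj * tk + 1) * (ti * tj + ti * th + tj * th + 1) :=
    Real.sq_sqrt (mul_pos hL1 hL2).le
  set N := 2 - ti ^ 2 - tj ^ 2 + ti * tk + ti * th + tj * tk + tj * th with hNdef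
  have hkey : 4 * ((ti * tj + ti * tk + tj * tk + 1) * (ti * tj + ti * th + tj * th + 1))
      - N ^ 2 = (ti + tj) ^ 2 * Q2 := by rw [hQ2, hNdef]; ring
  have h1mu : 1 - (N / (2 * S)) ^ 2 = ((ti + tj) * Real.sqrt Q2 / (2 * S)) ^ 2 := by
    field_simp
    linear_combination hkey - (ti + tj) ^ 2 * hQrt + 4 * hS2
  have hposr : 0 < ((ti + tj) * Real.sqrt Q2 / (2 * S)) ^ 2 := by positivity
  have hlt : (N / (2 * S)) ^ 2 < 1 := by
    have h0 : (0:ℝ) < 1 - (N / (2 * S)) ^ 2 := h1mu ▸ hposr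
    linarith
  have hne1 : N / (2 * S) ≠ 1 := by intro h; rw [h] at hlt; norm_num at hlt
  have hnem1 : N / (2 * S) ≠ -1 := by intro h; rw [h] at hlt; norm_num at hlt
  have hsq1mu : Real.sqrt (1 - (N / (2 * S)) ^ 2) = (ti + tj) * Real.sqrt Q2 / (2 * S) := by
    rw [h1mu, Real.sqrt_sq (by positivity)]
  -- derivative of inner function
  have ht' : HasDerivAt Real.tanh (1 / Real.cosh rk ^ 2) rk := tanh_hasDerivAt rk
  have hN' : HasDerivAt
      (fun x => 2 - ti ^ 2 - tj ^ 2 + ti * tanh x + ti * th + tj * tanh x + tj * th)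
      ((ti + tj) * (1 / Real.cosh rk ^ 2)) rk := by
    have h :=
      ((((ht'.const_mul ti).const_add (2 - ti ^ 2 - tj ^ 2)).add_const (ti * th)).add
        (ht'.const_mul tj)).add_const (tj * th)
    refine h.congr_deriv ?_
    ring
  have hG : HasDerivAt
      (fun x => (ti * tj + ti * tanh x + tj * tanh x + 1) * (ti * tj + ti * th + tj * th + 1))
      ((ti + tj) * (1 / Real.cosh rk ^ 2) * (ti * tj + ti * th + tj * th + 1)) rk := by
    have h :=
      ((((ht'.const_mul ti).const_add (ti * tj)).add (ht'.const_mul tj)).add_const 1).mul_const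
        (ti * tj + ti * th + tj * th + 1)
    refine h.congr_deriv ?_
    ring
  have hGval : (ti * tj + ti * tanh rk + tj * tanh rk + 1) * (ti * tj + ti * th + tj * th + 1)
      ≠ 0 := by rw [← htk]; positivity
  have hSqrt := hG.sqrt hGval
  have hDen := hSqrt.const_mul 2
  have hDval : 2 * Real.sqrt ((ti * tj + ti * tanh rk + tj * tanh rk + 1) *
      (ti * tj + ti * th + tj * th + 1)) ≠ 0 := by
    rw [← htk]; exact by positivity
  have hu' := hN'.div hDen hDval
  have harc := Real.hasDerivAt_arccos (x := N / (2 * S)) hnem1 hne1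
  have hpt : N / (2 * S) =
      (2 - ti ^ 2 - tj ^ 2 + ti * tanh rk + ti * th + tj * tanh rk + tj * th) /
        (2 * Real.sqrt ((ti * tj + ti * tanh rk + tj * tanh rk + 1) *
          (ti * tj + ti * th + tj * th + 1))) := by
    rw [← htk]
  rw [hpt] at harc
  have hcomp := harc.comp rk hu'
  rw [← htk] at hcomp
  simp only [Function.comp_def] at hcomp
  refine hcomp.congr_deriv ?_
  have hcosh3 : Real.cosh (ri + rj + rk) =
      Real.cosh ri * Real.cosh rj * Real.cosh rk * (ti * tj + ti * tk + tj * tk + 1) := by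
    rw [hti, htj, htk]
    simp only [Real.cosh_add, Real.sinh_add, Real.tanh_eq_sinh_div_cosh]
    field_simp [(Real.cosh_pos ri).ne', (Real.cosh_pos rj).ne', (Real.cosh_pos rk).ne']
    ring
  rw [← hSdef, ← hNdef, hsq1mu, hcosh3]
  rw [hNdef]
  have hci := (Real.cosh_pos ri).ne'
  have hcj := (Real.cosh_pos rj).ne'
  have hck := (Real.cosh_pos rk).ne'
  have hs0 : ti + tj ≠ 0 := by positivity
  field_simp
  linear_combination ((ti + tj) * (ti + tj + tk - th) -
      2 * (ti * tj + ti * tk + tj * tk + 1)) * hS2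
end

section
/- For all t_i, t_j, t_k, t_h ∈ (0,1), the quantity H_j = 2t_i^2t_j^2 + t_j^2t_k^2 + t_j^2t_h^2 + 2t_i^2t_jt_k + 2t_i^2t_jt_h + 2t_i^2t_kt_h + t_it_j^2t_k + t_it_j^2t_h + 4t_it_jt_kt_h − 2t_it_j^3 − t_j^3t_k − t_j^3t_h − 2t_j^2 − t_k^2 − t_h^2 + 6t_it_j + 3t_it_k + 3t_it_h + 3t_jt_k + 3t_jt_h + 2t_kt_h + 4 is strictly positive. -/
/-- Remark 3.4 of the paper: for `t_i, t_j, t_k, t_h ∈ (0,1)` the quantity `H_j` is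
strictly positive. -/
theorem Hj_pos (ti tj tk th : ℝ)
    (hi : ti ∈ Set.Ioo (0 : ℝ) 1) (hj : tj ∈ Set.Ioo (0 : ℝ) 1)
    (hk : tk ∈ Set.Ioo (0 : ℝ) 1) (hh : th ∈ Set.Ioo (0 : ℝ) 1) :
    0 < 2 * ti ^ 2 * tj ^ 2 + tj ^ 2 * tk ^ 2 + tj ^ 2 * th ^ 2
        + 2 * ti ^ 2 * tj * tk + 2 * ti ^ 2 * tj * th + 2 * ti ^ 2 * tk * th
        + ti * tj ^ 2 * tk + ti * tj ^ 2 * th + 4 * ti * tj * tk * th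
        - 2 * ti * tj ^ 3 - tj ^ 3 * tk - tj ^ 3 * th - 2 * tj ^ 2 - tk ^ 2 - th ^ 2
        + 6 * ti * tj + 3 * ti * tk + 3 * ti * th + 3 * tj * tk + 3 * tj * th
        + 2 * tk * th + 4 := by
  obtain ⟨hi0, hi1⟩ := hi
  obtain ⟨hj0, hj1⟩ := hj
  obtain ⟨hk0, hk1⟩ := hk
  obtain ⟨hh0, hh1⟩ := hh
  have hjj : tj ^ 3 ≤ tj := by nlinarith [mul_nonneg (mul_nonneg hj0.le (sub_nonneg.2 hj1.le)) (by linarith : (0:ℝ) ≤ 1 + tj)]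
  have e1 : ti * tj ^ 3 ≤ ti * tj := by nlinarith [mul_le_mul_of_nonneg_left hjj hi0.le]
  have e2 : tj ^ 3 * tk ≤ tj * tk := by nlinarith [mul_le_mul_of_nonneg_right hjj hk0.le]
  have e3 : tj ^ 3 * th ≤ tj * th := by nlinarith [mul_le_mul_of_nonneg_right hjj hh0.le]
  have e4 : tj ^ 2 < 1 := by nlinarith
  have e5 : tk ^ 2 < 1 := by nlinarith
  have e6 : th ^ 2 < 1 := by nlinarith
  nlinarith [mul_pos hi0 hj0, mul_pos hj0 hk0, mul_pos hj0 hh0, mul_pos hi0 hk0,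
    mul_pos hi0 hh0, mul_pos hk0 hh0, sq_nonneg (ti*tj), sq_nonneg (tj*tk), sq_nonneg (tj*th),
    mul_pos (mul_pos hi0 hi0) (mul_pos hj0 hk0),
    mul_pos (mul_pos hi0 hi0) (mul_pos hj0 hh0),
    mul_pos (mul_pos hi0 hi0) (mul_pos hk0 hh0),
    mul_pos (mul_pos hi0 hj0) (mul_pos hj0 hk0),
    mul_pos (mul_pos hi0 hj0) (mul_pos hj0 hh0),
    mul_pos (mul_pos hi0 hj0) (mul_pos hk0 hh0)]
end

section
/- Define, for positive reals r_i, r_j, r_k, r_h with t_ν = tanh r_ν, the dihedral angles β_{ij,kh} = arccos((2 − t_i^2 − t_j^2 + t_it_k + t_it_h + t_jt_k + t_jt_h)/(2√(λ_1λ_2))), β_{ik,jh} = arccos((2 − t_i^2 − t_k^2 + t_it_j + t_it_h + t_kt_j + t_kt_h)/(2√(λ_1λ_3))), β_{ih,jk} = arccos((2 − t_i^2 − t_h^2 + t_it_j + t_it_k + t_ht_j + t_ht_k)/(2√(λ_2λ_3))), where λ_1 = t_it_j + t_it_k + t_jt_k + 1, λ_2 = t_it_j + t_it_h + t_jt_h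 + 1, λ_3 = t_it_k + t_it_h + t_kt_h + 1, and set Area(Δ_i) = π − β_{ij,kh} − β_{ik,jh} − β_{ih,jk}. Then for fixed r_i, r_k, r_h > 0, the function r_j ↦ Area(Δ_i) has, at every r_j > 0, derivative equal to −cosh r_k · cosh r_h · [2 − (t_k − t_h)^2 + t_i(t_j + t_k + t_h) + t_j(t_i + t_k + t_h)] / (√Q_2 · cosh(r_i + r_j + r_k) · cosh(r_i + r_j + r_h)), where Q_2 = (t_i+t_j+t_k+t_h)^2 − 2(t_i^2+t_j^2+t_k^2+t_h^2) + 4. -/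
/-!
Write `t_ν = tanh r_ν`. Each dihedral angle is `arccos (N / (2 √(λ λ')))` with `N`, `λ`, `λ'`
polynomials in the `t_ν`, and `4 λ λ' - N² = (t_a + t_b)² Q₂` for the angle at the edge `{a, b}`.
So `sin β = (t_a + t_b) √Q₂ / (2 √(λ λ'))`, and differentiating `arccos` leaves `1 / √Q₂` times a
rational function of the `t_ν`; the three contributions add up to
`-(1 - t_i²) [⋯] / (√Q₂ λ₁ λ₂)`. The chain rule through `tanh' = cosh⁻²`, together with
`cosh (x + y + z) = cosh x cosh y cosh z · λ(tanh x, tanh y, tanh z)`, gives the stated formula.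
-/

open Real

namespace Real

theorem hasDerivAt_tanh (x : ℝ) : HasDerivAt tanh (cosh x ^ 2)⁻¹ x := by
  have h := (hasDerivAt_sinh x).div (hasDerivAt_cosh x) (cosh_pos x).ne'
  rw [show sinh / cosh = tanh from funext fun y => (tanh_eq_sinh_div_cosh y).symm] at h
  refine h.congr_deriv ?_
  rw [show cosh x * cosh x - sinh x * sinh x = 1 by linear_combination cosh_sq_sub_sinh_sq x,
    one_div]

theorem tanh_pos {x : ℝ} (hx : 0 < x) : 0 < tanh x := by
  rw [tanh_eq_sinh_div_cosh]
  exact div_pos (sinh_pos_iff.mpr hx) (cosh_pos x)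

theorem one_sub_tanh_sq (x : ℝ) : 1 - tanh x ^ 2 = (cosh x ^ 2)⁻¹ := by
  have := (cosh_pos x).ne'
  rw [tanh_eq_sinh_div_cosh]
  field_simp
  linear_combination cosh_sq_sub_sinh_sq x

end Real

theorem HasDerivAt.arccos_div_two_mul_sqrt {f g : ℝ → ℝ} {f' g' c x : ℝ}
    (hf : HasDerivAt f f' x) (hg : HasDerivAt g g' x) (hc : 0 < c)
    (hfg : 4 * g x - f x ^ 2 = c ^ 2) :
    HasDerivAt (fun y => arccos (f y / (2 * √(g y))))
      (-(2 * f' * g x - f x * g') / (2 * g x * c)) x := by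
  have hg0 : 0 < g x := by nlinarith [sq_nonneg (f x)]
  have hs : 0 < √(g x) := sqrt_pos.mpr hg0
  have hs2 : √(g x) ^ 2 = g x := sq_sqrt hg0.le
  have hu := hf.div ((hg.sqrt hg0.ne').const_mul 2) (by positivity)
  set u := f x / (2 * √(g x))
  have h1u : 1 - u ^ 2 = (c / (2 * √(g x))) ^ 2 := by
    simp only [u, div_pow, mul_pow, hs2]
    field_simp
    linarith
  have hu1 : u ^ 2 < 1 := by nlinarith [h1u, div_pos hc (by positivity : (0:ℝ) < 2 * √(g x))]
  have hne1 : u ≠ 1 := by rintro h; simp [h] at hu1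
  have hne2 : u ≠ -1 := by rintro h; simp [h] at hu1
  refine ((hasDerivAt_arccos hne2 hne1).comp x hu).congr_deriv ?_
  rw [h1u, sqrt_sq (by positivity)]
  field_simp
  rw [hs2]
  ring

namespace HyperIdealTetrahedron

/-- The paper's `λ`, in the variables `t_ν = tanh r_ν`. -/
def lam (a b c : ℝ) : ℝ := a * b + a * c + b * c + 1

/-- The paper's `Q₂`. -/
def Q (a b c d : ℝ) : ℝ := (a + b + c + d) ^ 2 - 2 * (a ^ 2 + b ^ 2 + c ^ 2 + d ^ 2) + 4

def cosNum (a b c d : ℝ) : ℝ := 2 - a ^ 2 - b ^ 2 + a * c + a * d + b * c + b * d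

/-- The dihedral angle `β_{ab,cd}` at the edge `{a, b}`, in the variables `t_ν = tanh r_ν`. -/
noncomputable def dihedralAngle (a b c d : ℝ) : ℝ :=
  arccos (cosNum a b c d / (2 * √(lam a b c * lam a b d)))

/-- The paper's `Area(Δ_i)`, with `a, b, c, d` standing for `t_i, t_j, t_k, t_h`. -/
noncomputable def vertexArea (a b c d : ℝ) : ℝ :=
  π - dihedralAngle a b c d - dihedralAngle a c b d - dihedralAngle a d b c

theorem cosh_add_add (x y z : ℝ) :
    cosh (x + y + z) = cosh x * cosh y * cosh z * lam (tanh x) (tanh y) (tanh z) := by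
  have := (cosh_pos x).ne'
  have := (cosh_pos y).ne'
  have := (cosh_pos z).ne'
  simp only [cosh_add, sinh_add, lam, tanh_eq_sinh_div_cosh]
  field_simp
  ring

theorem Q_pos {a b c d : ℝ} (ha : 0 ≤ a) (hb : 0 ≤ b) (hc : 0 ≤ c) (hd : 0 ≤ d)
    (ha₁ : a < 1) (hb₁ : b < 1) (hc₁ : c < 1) (hd₁ : d < 1) : 0 < Q a b c d := by
  unfold Q
  nlinarith [mul_nonneg ha hb, mul_nonneg ha hc, mul_nonneg ha hd, mul_nonneg hb hc,
    mul_nonneg hb hd, mul_nonneg hc hd]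

theorem four_mul_lam_mul_lam_sub_cosNum_sq (a b c d : ℝ) :
    4 * (lam a b c * lam a b d) - cosNum a b c d ^ 2 = (a + b) ^ 2 * Q a b c d := by
  unfold lam cosNum Q
  ring

theorem lam_mul_lam_pos {a b c d : ℝ} (hab : a + b ≠ 0) (hQ : 0 < Q a b c d) :
    0 < lam a b c * lam a b d := by
  nlinarith [four_mul_lam_mul_lam_sub_cosNum_sq a b c d, sq_nonneg (cosNum a b c d),
    mul_pos (pow_pos (abs_pos.mpr hab) 2) hQ, sq_abs (a + b)]

variable {a b c d : ℝ}

theorem hasDerivAt_lam_snd : HasDerivAt (fun t => lam a t c) (a + c) b :=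
  ((((hasDerivAt_id' b).const_mul a).add_const (a * c)).add
    ((hasDerivAt_id' b).mul_const c)).add_const 1 |>.congr_deriv (by ring)

theorem hasDerivAt_lam_thd : HasDerivAt (fun t => lam a b t) (a + b) c :=
  ((((hasDerivAt_id' c).const_mul a).const_add (a * b)).add
    ((hasDerivAt_id' c).const_mul b)).add_const 1 |>.congr_deriv (by ring)

theorem hasDerivAt_cosNum_snd : HasDerivAt (fun t => cosNum a t c d) (c + d - 2 * b) b :=
  (((((hasDerivAt_const b (2 - a ^ 2)).sub ((hasDerivAt_id' b).pow 2)).add_const (a * c)).add_const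
    (a * d)).add ((hasDerivAt_id' b).mul_const c)).add ((hasDerivAt_id' b).mul_const d)
    |>.congr_deriv (by ring)

theorem hasDerivAt_cosNum_thd : HasDerivAt (fun t => cosNum a b t d) (a + b) c :=
  (((((hasDerivAt_id' c).const_mul a).const_add (2 - a ^ 2 - b ^ 2)).add_const (a * d)).add
    ((hasDerivAt_id' c).const_mul b)).add_const (b * d) |>.congr_deriv (by ring)

theorem hasDerivAt_dihedralAngle_snd (hab : 0 < a + b) (hQ : 0 < Q a b c d) :
    HasDerivAt (fun t => dihedralAngle a t c d)
      (-(2 * (c + d - 2 * b) * (lam a b c * lam a b d)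
          - cosNum a b c d * ((a + c) * lam a b d + lam a b c * (a + d))) /
        (2 * (lam a b c * lam a b d) * ((a + b) * √(Q a b c d)))) b :=
  hasDerivAt_cosNum_snd.arccos_div_two_mul_sqrt (hasDerivAt_lam_snd.mul hasDerivAt_lam_snd)
    (mul_pos hab (sqrt_pos.mpr hQ)) (by
      rw [four_mul_lam_mul_lam_sub_cosNum_sq, mul_pow, sq_sqrt hQ.le])

theorem hasDerivAt_dihedralAngle_thd (hab : 0 < a + b) (hQ : 0 < Q a b c d) :
    HasDerivAt (fun t => dihedralAngle a b t d)
      (-((a + b) * (a + b + c - d)) / (2 * lam a b c * √(Q a b c d))) c := by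
  have hlam := lam_mul_lam_pos hab.ne' hQ
  have hc : lam a b c ≠ 0 := left_ne_zero_of_mul hlam.ne'
  have hd : lam a b d ≠ 0 := right_ne_zero_of_mul hlam.ne'
  have hs : √(Q a b c d) ≠ 0 := (sqrt_pos.mpr hQ).ne'
  refine (hasDerivAt_cosNum_thd.arccos_div_two_mul_sqrt
    (hasDerivAt_lam_thd.mul_const (lam a b d)) (mul_pos hab (sqrt_pos.mpr hQ)) ?_).congr_deriv ?_
  · rw [four_mul_lam_mul_lam_sub_cosNum_sq, mul_pow, sq_sqrt hQ.le]
  · field_simp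
    unfold lam cosNum
    ring

theorem hasDerivAt_vertexArea_snd (hab : 0 < a + b) (hac : 0 < a + c) (had : 0 < a + d)
    (hQ : 0 < Q a b c d) :
    HasDerivAt (fun t => vertexArea a t c d)
      (-(1 - a ^ 2) * (2 - (c - d) ^ 2 + a * (b + c + d) + b * (a + c + d)) /
        (√(Q a b c d) * (lam a b c * lam a b d))) b := by
  have hQc : Q a c b d = Q a b c d := by unfold Q; ring
  have hQd : Q a d b c = Q a b c d := by unfold Q; ring
  have hlam := lam_mul_lam_pos hab.ne' hQ
  have hc : lam a b c ≠ 0 := left_ne_zero_of_mul hlam.ne'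
  have hd : lam a b d ≠ 0 := right_ne_zero_of_mul hlam.ne'
  have hs : √(Q a b c d) ≠ 0 := (sqrt_pos.mpr hQ).ne'
  refine ((((hasDerivAt_const b π).sub (hasDerivAt_dihedralAngle_snd hab hQ)).sub
    (hasDerivAt_dihedralAngle_thd hac (hQc ▸ hQ))).sub
    (hasDerivAt_dihedralAngle_thd had (hQd ▸ hQ))).congr_deriv ?_
  rw [hQc, hQd, show lam a c b = lam a b c by unfold lam; ring,
    show lam a d b = lam a b d by unfold lam; ring]
  field_simp
  unfold lam cosNum
  ring

end HyperIdealTetrahedron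

open HyperIdealTetrahedron in
/-- Lemma 3.5 of the paper: the derivative of the area of the vertex triangle
`Area(Δ_i) = π − β_{ij,kh} − β_{ik,jh} − β_{ih,jk}` with respect to `r_j` equals
`− cosh r_k · cosh r_h · [2 − (t_k − t_h)² + t_i(t_j + t_k + t_h) + t_j(t_i + t_k + t_h)]
  / (√Q₂ · cosh(r_i+r_j+r_k) · cosh(r_i+r_j+r_h))`. -/
theorem deriv_area_rj (ri rj rk rh : ℝ)
    (hri : 0 < ri) (hrj : 0 < rj) (hrk : 0 < rk) (hrh : 0 < rh)
    (ti tj tk th Q2 : ℝ)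
    (hti : ti = tanh ri) (htj : tj = tanh rj) (htk : tk = tanh rk) (hth : th = tanh rh)
    (hQ2 : Q2 = (ti + tj + tk + th) ^ 2 - 2 * (ti ^ 2 + tj ^ 2 + tk ^ 2 + th ^ 2) + 4) :
    HasDerivAt
      (fun x : ℝ => π
        - arccos ((2 - ti ^ 2 - tanh x ^ 2 + ti * tk + ti * th + tanh x * tk + tanh x * th) /
            (2 * Real.sqrt ((ti * tanh x + ti * tk + tanh x * tk + 1) *
              (ti * tanh x + ti * th + tanh x * th + 1))))
        - arccos ((2 - ti ^ 2 - tk ^ 2 + ti * tanh x + ti * th + tk * tanh x + tk * th) /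
            (2 * Real.sqrt ((ti * tk + ti * tanh x + tk * tanh x + 1) *
              (ti * tk + ti * th + tk * th + 1))))
        - arccos ((2 - ti ^ 2 - th ^ 2 + ti * tanh x + ti * tk + th * tanh x + th * tk) /
            (2 * Real.sqrt ((ti * th + ti * tanh x + th * tanh x + 1) *
              (ti * th + ti * tk + th * tk + 1)))))
      (-(cosh rk * cosh rh *
          (2 - (tk - th) ^ 2 + ti * (tj + tk + th) + tj * (ti + tk + th))) /
        (Real.sqrt Q2 * cosh (ri + rj + rk) * cosh (ri + rj + rh)))
      rj := by
  subst hti htj htk hth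
  have hi := tanh_pos hri
  have hj := tanh_pos hrj
  have hk := tanh_pos hrk
  have hh := tanh_pos hrh
  have hQ : 0 < Q (tanh ri) (tanh rj) (tanh rk) (tanh rh) :=
    Q_pos hi.le hj.le hk.le hh.le (tanh_lt_one ri) (tanh_lt_one rj) (tanh_lt_one rk)
      (tanh_lt_one rh)
  have hArea := hasDerivAt_vertexArea_snd (add_pos hi hj) (add_pos hi hk) (add_pos hi hh) hQ
  refine (hArea.comp rj (hasDerivAt_tanh rj)).congr_deriv ?_
  rw [show Q2 = Q (tanh ri) (tanh rj) (tanh rk) (tanh rh) from hQ2, cosh_add_add, cosh_add_add,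
    one_sub_tanh_sq]
  have := (cosh_pos ri).ne'
  have := (cosh_pos rj).ne'
  field_simp
end

section
/- For all t_i, t_j, t_k, t_h ∈ (0,1), with H_j = 2t_i^2t_j^2 + t_j^2t_k^2 + t_j^2t_h^2 + 2t_i^2t_jt_k + 2t_i^2t_jt_h + 2t_i^2t_kt_h + t_it_j^2t_k + t_it_j^2t_h + 4t_it_jt_kt_h − 2t_it_j^3 − t_j^3t_k − t_j^3t_h − 2t_j^2 − t_k^2 − t_h^2 + 6t_it_j + 3t_it_k + 3t_it_h + 3t_jt_k + 3t_jt_h + 2t_kt_h + 4 and O_j = 2 − (t_k − t_h)^2 + t_i(t_j + t_k + t_h) + t_j(t_i + t_k + t_h), one has 2·O_j·(1 − t_j^2) < H_j. -/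
/-- The key estimate in the proof of Theorem 3.7 of the paper:
for `t_i, t_j, t_k, t_h ∈ (0,1)` one has `2 O_j (1 − t_j²) < H_j`. -/
theorem key_estimate (ti tj tk th : ℝ)
    (hi : ti ∈ Set.Ioo (0 : ℝ) 1) (hj : tj ∈ Set.Ioo (0 : ℝ) 1)
    (hk : tk ∈ Set.Ioo (0 : ℝ) 1) (hh : th ∈ Set.Ioo (0 : ℝ) 1)
    (Hj Oj : ℝ)
    (hHj : Hj = 2 * ti ^ 2 * tj ^ 2 + tj ^ 2 * tk ^ 2 + tj ^ 2 * th ^ 2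
        + 2 * ti ^ 2 * tj * tk + 2 * ti ^ 2 * tj * th + 2 * ti ^ 2 * tk * th
        + ti * tj ^ 2 * tk + ti * tj ^ 2 * th + 4 * ti * tj * tk * th
        - 2 * ti * tj ^ 3 - tj ^ 3 * tk - tj ^ 3 * th - 2 * tj ^ 2 - tk ^ 2 - th ^ 2
        + 6 * ti * tj + 3 * ti * tk + 3 * ti * th + 3 * tj * tk + 3 * tj * th
        + 2 * tk * th + 4)
    (hOj : Oj = 2 - (tk - th) ^ 2 + ti * (tj + tk + th) + tj * (ti + tk + th)) :
    2 * Oj * (1 - tj ^ 2) < Hj := by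
  obtain ⟨hi0, hi1⟩ := hi
  obtain ⟨hj0, hj1⟩ := hj
  obtain ⟨hk0, hk1⟩ := hk
  obtain ⟨hh0, hh1⟩ := hh
  subst hHj hOj
  nlinarith [mul_pos hi0 hj0, mul_pos hi0 hk0, mul_pos hi0 hh0,
    mul_pos hj0 hk0, mul_pos hj0 hh0, mul_pos hk0 hh0,
    mul_pos (mul_pos hi0 hj0) (mul_pos hk0 hh0),
    mul_pos (mul_pos hi0 hi0) (mul_pos hk0 hh0),
    mul_pos (mul_pos hi0 hi0) (mul_pos hj0 hk0),
    mul_pos (mul_pos hi0 hi0) (mul_pos hj0 hh0),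
    mul_pos (mul_pos hi0 hi0) (mul_pos hj0 hj0),
    mul_pos (mul_pos hj0 hj0) (mul_pos hk0 hh0),
    mul_pos (mul_pos hi0 hj0) (mul_pos hj0 hk0),
    mul_pos (mul_pos hi0 hj0) (mul_pos hj0 hh0),
    mul_pos (mul_pos hi0 hj0) (mul_pos hj0 hj0),
    mul_pos (mul_pos hj0 hj0) (mul_pos hj0 hk0),
    mul_pos (mul_pos hj0 hj0) (mul_pos hj0 hh0),
    mul_nonneg (mul_nonneg (sub_nonneg.2 hj1.le) (sub_nonneg.2 (by linarith : -tj ≤ 1))) (sq_nonneg (tk - th)),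
    sq_nonneg (tk - th), mul_pos hj0 hj0]
end

section
/- For all t_i, t_j, t_k, t_h ∈ (0,1), with λ_1 = t_it_j + t_it_k + t_jt_k + 1, λ_2 = t_it_j + t_it_h + t_jt_h + 1, λ_3 = t_it_k + t_it_h + t_kt_h + 1, O_j = 2 − (t_k − t_h)^2 + t_i(t_j + t_k + t_h) + t_j(t_i + t_k + t_h), O_k = 2 − (t_j − t_h)^2 + t_i(t_j + t_k + t_h) + t_k(t_i + t_j + t_h), O_h = 2 − (t_j − t_k)^2 + t_i(t_j + t_k + t_h) + t_h(t_i + t_j + t_k), and H_j, H_k, H_h the polynomials of equation (12) and its analogues (H_j as in the paper; H_k and H_h obtained by the corresponding permutations of indices), one has 2O_j(1 − t_j^2)λ_3 + 2O_k(1 − t_k^2)λ_2 + 2O_h(1 − t_h^2)λ_1 < H_jλ_3 + H_kλ_2 + H_hλ_1. -/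
/-- Auxiliary: the generic diagonal-dominance term is positive. -/
lemma diag_dom_aux (a b c d : ℝ) (ha : 0 < a) (hb0 : 0 < b) (hb1 : b < 1)
    (hc : 0 < c) (hd : 0 < d) :
    2 * (2 - (c - d) ^ 2 + a * (b + c + d) + b * (a + c + d)) * (1 - b ^ 2) <
      2 * a ^ 2 * b ^ 2 + b ^ 2 * c ^ 2 + b ^ 2 * d ^ 2
        + 2 * a ^ 2 * b * c + 2 * a ^ 2 * b * d + 2 * a ^ 2 * c * d
        + a * b ^ 2 * c + a * b ^ 2 * d + 4 * a * b * c * d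
        - 2 * a * b ^ 3 - b ^ 3 * c - b ^ 3 * d - 2 * b ^ 2 - c ^ 2 - d ^ 2
        + 3 * a * c + 3 * a * d + 6 * a * b + 3 * b * c + 3 * b * d
        + 2 * c * d + 4 := by
  have key : (2 * a ^ 2 * b ^ 2 + b ^ 2 * c ^ 2 + b ^ 2 * d ^ 2
        + 2 * a ^ 2 * b * c + 2 * a ^ 2 * b * d + 2 * a ^ 2 * c * d
        + a * b ^ 2 * c + a * b ^ 2 * d + 4 * a * b * c * d
        - 2 * a * b ^ 3 - b ^ 3 * c - b ^ 3 * d - 2 * b ^ 2 - c ^ 2 - d ^ 2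
        + 3 * a * c + 3 * a * d + 6 * a * b + 3 * b * c + 3 * b * d
        + 2 * c * d + 4)
      - 2 * (2 - (c - d) ^ 2 + a * (b + c + d) + b * (a + c + d)) * (1 - b ^ 2)
      = (1 - b ^ 2) * (c - d) ^ 2
        + (b * d + b * c + 2 * b ^ 2 + 2 * b ^ 2 * c * d + b ^ 3 * d + b ^ 3 * c
          + a * d + a * c + 2 * a * b + 4 * a * b * c * d + 3 * a * b ^ 2 * d
          + 3 * a * b ^ 2 * c + 2 * a * b ^ 3 + 2 * a ^ 2 * c * d
          + 2 * a ^ 2 * b * d + 2 * a ^ 2 * b * c + 2 * a ^ 2 * b ^ 2) := by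
    ring
  have h1 : 0 ≤ (1 - b ^ 2) * (c - d) ^ 2 :=
    mul_nonneg (by nlinarith) (sq_nonneg _)
  have h2 : 0 < b * d + b * c + 2 * b ^ 2 + 2 * b ^ 2 * c * d + b ^ 3 * d + b ^ 3 * c
          + a * d + a * c + 2 * a * b + 4 * a * b * c * d + 3 * a * b ^ 2 * d
          + 3 * a * b ^ 2 * c + 2 * a * b ^ 3 + 2 * a ^ 2 * c * d
          + 2 * a ^ 2 * b * d + 2 * a ^ 2 * b * c + 2 * a ^ 2 * b ^ 2 := by positivity
  linarith



set_option maxHeartbeats 1000000 in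
/-- The claim (14) in the proof of Theorem 3.7 of the paper:
`2O_j(1 − t_j²)λ₃ + 2O_k(1 − t_k²)λ₂ + 2O_h(1 − t_h²)λ₁ < H_jλ₃ + H_kλ₂ + H_hλ₁`
for all `t_i, t_j, t_k, t_h ∈ (0,1)`. -/
theorem diagonal_dominance (ti tj tk th : ℝ)
    (hi : ti ∈ Set.Ioo (0 : ℝ) 1) (hj : tj ∈ Set.Ioo (0 : ℝ) 1)
    (hk : tk ∈ Set.Ioo (0 : ℝ) 1) (hh : th ∈ Set.Ioo (0 : ℝ) 1)
    (lam1 lam2 lam3 Oj Ok Oh Hj Hk Hh : ℝ)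
    (hlam1 : lam1 = ti * tj + ti * tk + tj * tk + 1)
    (hlam2 : lam2 = ti * tj + ti * th + tj * th + 1)
    (hlam3 : lam3 = ti * tk + ti * th + tk * th + 1)
    (hOj : Oj = 2 - (tk - th) ^ 2 + ti * (tj + tk + th) + tj * (ti + tk + th))
    (hOk : Ok = 2 - (tj - th) ^ 2 + ti * (tj + tk + th) + tk * (ti + tj + th))
    (hOh : Oh = 2 - (tj - tk) ^ 2 + ti * (tj + tk + th) + th * (ti + tj + tk))
    (hHj : Hj = 2 * ti ^ 2 * tj ^ 2 + tj ^ 2 * tk ^ 2 + tj ^ 2 * th ^ 2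
        + 2 * ti ^ 2 * tj * tk + 2 * ti ^ 2 * tj * th + 2 * ti ^ 2 * tk * th
        + ti * tj ^ 2 * tk + ti * tj ^ 2 * th + 4 * ti * tj * tk * th
        - 2 * ti * tj ^ 3 - tj ^ 3 * tk - tj ^ 3 * th - 2 * tj ^ 2 - tk ^ 2 - th ^ 2
        + 6 * ti * tj + 3 * ti * tk + 3 * ti * th + 3 * tj * tk + 3 * tj * th
        + 2 * tk * th + 4)
    (hHk : Hk = 2 * ti ^ 2 * tk ^ 2 + tj ^ 2 * tk ^ 2 + tk ^ 2 * th ^ 2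
        + 2 * ti ^ 2 * tj * tk + 2 * ti ^ 2 * tj * th + 2 * ti ^ 2 * tk * th
        + ti * tj * tk ^ 2 + ti * tk ^ 2 * th + 4 * ti * tj * tk * th
        - 2 * ti * tk ^ 3 - tj * tk ^ 3 - tk ^ 3 * th - tj ^ 2 - 2 * tk ^ 2 - th ^ 2
        + 3 * ti * tj + 6 * ti * tk + 3 * ti * th + 3 * tj * tk + 2 * tj * th
        + 3 * tk * th + 4)
    (hHh : Hh = 2 * ti ^ 2 * th ^ 2 + tj ^ 2 * th ^ 2 + tk ^ 2 * th ^ 2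
        + 2 * ti ^ 2 * tj * tk + 2 * ti ^ 2 * tj * th + 2 * ti ^ 2 * tk * th
        + ti * tj * th ^ 2 + ti * tk * th ^ 2 + 4 * ti * tj * tk * th
        - 2 * ti * th ^ 3 - tj * th ^ 3 - tk * th ^ 3 - tj ^ 2 - tk ^ 2 - 2 * th ^ 2
        + 3 * ti * tj + 3 * ti * tk + 6 * ti * th + 2 * tj * tk + 3 * tj * th
        + 3 * tk * th + 4) :
    2 * Oj * (1 - tj ^ 2) * lam3 + 2 * Ok * (1 - tk ^ 2) * lam2
        + 2 * Oh * (1 - th ^ 2) * lam1 <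
      Hj * lam3 + Hk * lam2 + Hh * lam1 := by
  obtain ⟨hi0, hi1⟩ := hi
  obtain ⟨hj0, hj1⟩ := hj
  obtain ⟨hk0, hk1⟩ := hk
  obtain ⟨hh0, hh1⟩ := hh
  have Dj := diag_dom_aux ti tj tk th hi0 hj0 hj1 hk0 hh0
  have Dk := diag_dom_aux ti tk tj th hi0 hk0 hk1 hj0 hh0
  have Dh := diag_dom_aux ti th tj tk hi0 hh0 hh1 hj0 hk0
  have hl1 : 0 < lam1 := by rw [hlam1]; positivity
  have hl2 : 0 < lam2 := by rw [hlam2]; positivity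
  have hl3 : 0 < lam3 := by rw [hlam3]; positivity
  rw [hOj, hOk, hOh, hHj, hHk, hHh]
  nlinarith [mul_pos (sub_pos.2 Dj) hl3, mul_pos (sub_pos.2 Dk) hl2,
    mul_pos (sub_pos.2 Dh) hl1]
end
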